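/- (Dissipativity of concatenated networks, infinitesimal form.) Let P₁, W₁ be n₁-channel open quantum systems and P₂, W₂ be n₂-channel open quantum systems, let V₁, V₂ be bounded self-adjoint operators, and let r₁, r₂ be bounded self-adjoint operators such that 𝒢_{P₁◁W₁}(V₁) ≤ r₁ and 𝒢_{P₂◁W₂}(V₂) ≤ r₂. Then 𝒢_{(P₁⊞P₂)◁(W₁⊞W₂)}(V₁ + V₂) ≤ r₁ + r₂ + 𝒢_{P₁◁W₁}(V₂) + 𝒢_{P₂◁W₂}(V₁). -/

import Mathlib

/-!
The generator `𝒢_G(X)` is additive in `X`, and it is additive under concatenation, since the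
Hamiltonians add and the coupling vectors are stacked. Because the scattering matrices of a
concatenation are block diagonal, the series product of two concatenations is the concatenation
of the series products: no cross terms between the two blocks of channels appear. Hence
`𝒢_{(P₁⊞P₂)◁(W₁⊞W₂)}(V₁ + V₂)` is the sum of the four terms `𝒢_{Pᵢ◁Wᵢ}(Vⱼ)`, and the claim
follows by adding the two hypotheses.
-/

noncomputable section

open Finset

variable {E : Type*} [NormedAddCommGroup E] [InnerProductSpace ℂ E] [CompleteSpace E]

/-- `Im{A} = (A - A*)/(2i)`. -/
def imOp (A : E →L[ℂ] E) : E →L[ℂ] E := (2 * Complex.I)⁻¹ • (A - star A)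

/-- An open quantum system `(S, L, H)` with field channels indexed by `ι`: an `ι×ι` matrix
`S` of bounded operators, an `ι`-vector `L` of bounded operators, and an operator `H`. -/
structure QOpen (ι : Type*) (E : Type*) [NormedAddCommGroup E] [InnerProductSpace ℂ E]
    [CompleteSpace E] where
  S : Matrix ι ι (E →L[ℂ] E)
  L : ι → E →L[ℂ] E
  H : E →L[ℂ] E

/-- The scattering matrix of `G` is unitary: `S†S = SS† = I`. -/
def QOpen.unitaryS {ι : Type*} [Fintype ι] [DecidableEq ι] (G : QOpen ι E) : Prop :=
  G.S.conjTranspose * G.S = 1 ∧ G.S * G.S.conjTranspose = 1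

/-- The series product `G₂ ◁ G₁ = (S₂S₁, L₂ + S₂L₁, H₁ + H₂ + Im{L₂†S₂L₁})`. -/
def series {ι : Type*} [Fintype ι] (G₂ G₁ : QOpen ι E) : QOpen ι E where
  S := G₂.S * G₁.S
  L := fun j => G₂.L j + ∑ k, G₂.S j k * G₁.L k
  H := G₁.H + G₂.H + imOp (∑ j, ∑ k, star (G₂.L j) * G₂.S j k * G₁.L k)

open scoped ComplexOrder

/-- Operator ordering: `A ≤ B` iff `⟨ψ, Aψ⟩ ≤ ⟨ψ, Bψ⟩` for all `ψ`. -/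
def opLE (A B : E →L[ℂ] E) : Prop :=
  ∀ ψ : E, (inner ℂ ψ (A ψ) : ℂ) ≤ (inner ℂ ψ (B ψ) : ℂ)

/-- The Lindblad superoperator `𝓛_L(X) = (1/2) Σ_j (L_j* [X, L_j] + [L_j*, X] L_j)`. -/
def lindblad {ι : Type*} [Fintype ι] (L : ι → E →L[ℂ] E) (X : E →L[ℂ] E) : E →L[ℂ] E :=
  (2 : ℂ)⁻¹ • ∑ j, (star (L j) * ⁅X, L j⁆ + ⁅star (L j), X⁆ * L j)

/-- The generator `𝒢_G(X) = −i[X, H] + 𝓛_L(X)` of an open quantum system `G`. -/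
def QOpen.gen {ι : Type*} [Fintype ι] (G : QOpen ι E) (X : E →L[ℂ] E) : E →L[ℂ] E :=
  (-Complex.I) • ⁅X, G.H⁆ + lindblad G.L X

/-- The concatenation `G₁ ⊞ G₂ = (diag(S₁, S₂), (L₁; L₂), H₁ + H₂)`. -/
def concat {ι κ : Type*} [Fintype ι] [Fintype κ] (G₁ : QOpen ι E) (G₂ : QOpen κ E) :
    QOpen (ι ⊕ κ) E where
  S := Matrix.fromBlocks G₁.S 0 0 G₂.S
  L := Sum.elim G₁.L G₂.L
  H := G₁.H + G₂.H

lemma imOp_add (A B : E →L[ℂ] E) : imOp (A + B) = imOp A + imOp B := by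
  rw [imOp, imOp, imOp, star_add, ← smul_add, add_sub_add_comm]

lemma lindblad_sumElim {ι κ : Type*} [Fintype ι] [Fintype κ]
    (L₁ : ι → E →L[ℂ] E) (L₂ : κ → E →L[ℂ] E) (X : E →L[ℂ] E) :
    lindblad (Sum.elim L₁ L₂) X = lindblad L₁ X + lindblad L₂ X := by
  rw [lindblad, Fintype.sum_sum_type, smul_add]
  rfl

lemma lindblad_add {ι : Type*} [Fintype ι] (L : ι → E →L[ℂ] E) (X Y : E →L[ℂ] E) :
    lindblad L (X + Y) = lindblad L X + lindblad L Y := by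
  simp only [lindblad, ← smul_add, ← sum_add_distrib]
  congr 1
  refine sum_congr rfl fun j _ => ?_
  simp only [Ring.lie_def]
  noncomm_ring

lemma QOpen.gen_add {ι : Type*} [Fintype ι] (G : QOpen ι E) (X Y : E →L[ℂ] E) :
    G.gen (X + Y) = G.gen X + G.gen Y := by
  simp only [QOpen.gen, lindblad_add, Ring.lie_def, add_mul, mul_add, smul_sub, smul_add]
  abel

lemma QOpen.gen_concat {ι κ : Type*} [Fintype ι] [Fintype κ]
    (G₁ : QOpen ι E) (G₂ : QOpen κ E) (X : E →L[ℂ] E) :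
    (concat G₁ G₂).gen X = G₁.gen X + G₂.gen X := by
  simp only [QOpen.gen, concat, lindblad_sumElim, Ring.lie_def, add_mul, mul_add, smul_sub,
    smul_add]
  abel

lemma series_concat {ι κ : Type*} [Fintype ι] [Fintype κ]
    (P₁ W₁ : QOpen ι E) (P₂ W₂ : QOpen κ E) :
    series (concat P₁ P₂) (concat W₁ W₂) = concat (series P₁ W₁) (series P₂ W₂) := by
  have hL : (fun j => (concat P₁ P₂).L j + ∑ k, (concat P₁ P₂).S j k * (concat W₁ W₂).L k)
      = Sum.elim (series P₁ W₁).L (series P₂ W₂).L := by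
    funext j
    cases j <;> simp [series, concat, Fintype.sum_sum_type]
  have hcoupling :
      (∑ j, ∑ k, star ((concat P₁ P₂).L j) * (concat P₁ P₂).S j k * (concat W₁ W₂).L k)
      = (∑ j, ∑ k, star (P₁.L j) * P₁.S j k * W₁.L k)
        + ∑ j, ∑ k, star (P₂.L j) * P₂.S j k * W₂.L k := by
    simp [concat, Fintype.sum_sum_type]
  simp only [series, hL, hcoupling, imOp_add]
  simp only [concat, Matrix.fromBlocks_multiply, Matrix.mul_zero, Matrix.zero_mul, add_zero,
    zero_add, QOpen.mk.injEq, true_and]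
  abel

section Order

variable {F : Type*} [NormedAddCommGroup F] [InnerProductSpace ℂ F]

lemma opLE_refl (A : F →L[ℂ] F) : opLE A A := fun _ => le_rfl

lemma opLE.add {A B C D : F →L[ℂ] F} (hAB : opLE A B) (hCD : opLE C D) :
    opLE (A + C) (B + D) := fun ψ => by
  simpa only [add_apply, inner_add_right] using add_le_add (hAB ψ) (hCD ψ)

end Order

theorem stmt_19_general {ι κ : Type*} [Fintype ι] [Fintype κ]
    (P₁ W₁ : QOpen ι E) (P₂ W₂ : QOpen κ E)
    (V₁ V₂ r₁ r₂ : E →L[ℂ] E)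
    (h₁ : opLE ((series P₁ W₁).gen V₁) r₁)
    (h₂ : opLE ((series P₂ W₂).gen V₂) r₂) :
    opLE ((series (concat P₁ P₂) (concat W₁ W₂)).gen (V₁ + V₂))
      (r₁ + r₂ + (series P₁ W₁).gen V₂ + (series P₂ W₂).gen V₁) := by
  rw [series_concat, QOpen.gen_concat, QOpen.gen_add, QOpen.gen_add]
  convert (h₁.add h₂).add (opLE_refl ((series P₁ W₁).gen V₂ + (series P₂ W₂).gen V₁))
    using 1 <;> abel

/-- dissipativity of concatenated networks, infinitesimal form: if
`𝒢_{P₁◁W₁}(V₁) ≤ r₁` and `𝒢_{P₂◁W₂}(V₂) ≤ r₂` for self-adjoint `V₁, V₂, r₁, r₂`, then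
`𝒢_{(P₁⊞P₂)◁(W₁⊞W₂)}(V₁ + V₂) ≤ r₁ + r₂ + 𝒢_{P₁◁W₁}(V₂) + 𝒢_{P₂◁W₂}(V₁)`. -/
theorem stmt_19 {ι κ : Type*} [Fintype ι] [DecidableEq ι] [Fintype κ] [DecidableEq κ]
    (P₁ W₁ : QOpen ι E) (P₂ W₂ : QOpen κ E)
    (hSP₁ : P₁.unitaryS) (hSW₁ : W₁.unitaryS) (hSP₂ : P₂.unitaryS) (hSW₂ : W₂.unitaryS)
    (hHP₁ : IsSelfAdjoint P₁.H) (hHW₁ : IsSelfAdjoint W₁.H)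
    (hHP₂ : IsSelfAdjoint P₂.H) (hHW₂ : IsSelfAdjoint W₂.H)
    (V₁ V₂ r₁ r₂ : E →L[ℂ] E)
    (hV₁ : IsSelfAdjoint V₁) (hV₂ : IsSelfAdjoint V₂)
    (hr₁ : IsSelfAdjoint r₁) (hr₂ : IsSelfAdjoint r₂)
    (h₁ : opLE ((series P₁ W₁).gen V₁) r₁)
    (h₂ : opLE ((series P₂ W₂).gen V₂) r₂) :
    opLE ((series (concat P₁ P₂) (concat W₁ W₂)).gen (V₁ + V₂))
      (r₁ + r₂ + (series P₁ W₁).gen V₂ + (series P₂ W₂).gen V₁) :=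
  stmt_19_general P₁ W₁ P₂ W₂ V₁ V₂ r₁ r₂ h₁ h₂
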